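/- Let C be a real k×n matrix of rank k with columns C_1,…,C_n ∈ ℝ^k, and let z = (z_1,…,z_n) ∈ ℂⁿ with z_i ≠ 0 for every i. For a ∈ ℂ^k write α_i(a) := Σ_{m=1}^{k} a_m·C_{m,i} ∈ ℂ. Then the map a ↦ ((α_1(a),…,α_n(a)), (z_1/α_1(a),…,z_n/α_n(a))) is a bijection from the set A := {a ∈ ℂ^k : α_i(a) ≠ 0 for all i, and Σ_{i=1}^{n} (z_i/α_i(a))·C_i = 0 in ℂ^k} onto the set B := {(y, ỹ) ∈ ℂⁿ × ℂⁿ : y lies in the complex row span of C, Σ_{i=1}^{n} ỹ_i·C_i = 0, and y_i·ỹ_i = z_i for all i}. (Equivalently: the critical points of the master function log Φ with Φ(a) = Π_i α_i(a)^{z_i} of the hyperplane arrangement attached to C are in bijection with the pairs (y, ỹ) used to build t-embeddings with prescribed boundary.) -/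

import Mathlib

open scoped Matrix

/-- Twisted-cyclic extension of a vector `x : Fin n → ℝ` to indices in `ℤ`,
with `x_{i+n} = ε • x_i`. -/
noncomputable def vecExt {n : ℕ} (ε : ℝ) (x : Fin n → ℝ) (i : ℤ) : ℝ :=
  if h : 0 < n then
    ε ^ (i / (n : ℤ)) *
      x ⟨(i % (n : ℤ)).toNat, by
        have hn : (0 : ℤ) < (n : ℤ) := by exact_mod_cast h
        have h1 : 0 ≤ i % (n : ℤ) := Int.emod_nonneg i hn.ne'
        have h2 : i % (n : ℤ) < (n : ℤ) := Int.emod_lt_of_pos i hn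
        omega⟩
  else 0

/-- Twisted-cyclic extension of the columns of a matrix. -/
noncomputable def colExt {m n : ℕ} (ε : ℝ) (A : Matrix (Fin m) (Fin n) ℝ) (i : ℤ) :
    Fin m → ℝ :=
  fun r => vecExt ε (fun j => A r j) i

/-- The bracket `⟨i j⟩ = det(λ_i, λ_j)` of two (extended) columns of a `2 × n` matrix. -/
noncomputable def brkt {n : ℕ} (ε : ℝ) (A : Matrix (Fin 2) (Fin n) ℝ) (i j : ℤ) : ℝ :=
  colExt ε A i 0 * colExt ε A j 1 - colExt ε A i 1 * colExt ε A j 0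

/-- The sign `(-1)^(k-1)` used in the twisted cyclic symmetry. -/
noncomputable def sgn (k : ℤ) : ℝ := (-1 : ℝ) ^ (k - 1)

/-- The angle in `[0, π]` between two vectors in `ℝ²`. -/
noncomputable def ang2 (v w : Fin 2 → ℝ) : ℝ :=
  Real.arccos ((v 0 * w 0 + v 1 * w 1) /
    (Real.sqrt (v 0 ^ 2 + v 1 ^ 2) * Real.sqrt (w 0 ^ 2 + w 1 ^ 2)))

/-- The total winding angle of the columns of a `2 × n` matrix. -/
noncomputable def wind {n : ℕ} (ε : ℝ) (A : Matrix (Fin 2) (Fin n) ℝ) : ℝ :=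
  ∑ i ∈ Finset.range n, ang2 (colExt ε A (i : ℤ)) (colExt ε A ((i : ℤ) + 1))

/-- The set `λ⁺_{k,n}`. -/
noncomputable def lamPlus (n : ℕ) (k : ℤ) (A : Matrix (Fin 2) (Fin n) ℝ) : Prop :=
  (∀ i ∈ Finset.range n, 0 < brkt (sgn k) A (i : ℤ) ((i : ℤ) + 1)) ∧
  wind (sgn k) A = ((k : ℝ) - 1) * Real.pi

/-- The set `λ̃⁺_{k,n}`. -/
noncomputable def latPlus (n : ℕ) (k : ℤ) (A : Matrix (Fin 2) (Fin n) ℝ) : Prop :=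
  (∀ i ∈ Finset.range n, 0 < brkt (sgn k) A (i : ℤ) ((i : ℤ) + 1)) ∧
  wind (sgn k) A = ((k : ℝ) + 1) * Real.pi

/-- The set `λλ̃⁺_{k,n}` of pairs with momentum conservation. -/
noncomputable def lamlatPlus (n : ℕ) (k : ℤ) (lam lat : Matrix (Fin 2) (Fin n) ℝ) : Prop :=
  lamPlus n k lam ∧ latPlus n k lat ∧ lam * lat.transpose = 0

/-- The row span of a matrix, as a submodule of `ℝⁿ`. -/
def rowSpan {m n : ℕ} (A : Matrix (Fin m) (Fin n) ℝ) : Submodule ℝ (Fin n → ℝ) :=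
  Submodule.span ℝ (Set.range fun i => A i)

/-- All maximal minors are nonnegative. -/
def nonnegMinors {k n : ℕ} (C : Matrix (Fin k) (Fin n) ℝ) : Prop :=
  ∀ f : Fin k → Fin n, StrictMono f → 0 ≤ (C.submatrix id f).det

/-- All maximal minors are positive. -/
def posMinors {k n : ℕ} (C : Matrix (Fin k) (Fin n) ℝ) : Prop :=
  ∀ f : Fin k → Fin n, StrictMono f → 0 < (C.submatrix id f).det

/-- `C` represents a point of the totally nonnegative Grassmannian `Gr_{≥0}(k,n)`. -/
def GrNonneg {k n : ℕ} (C : Matrix (Fin k) (Fin n) ℝ) : Prop :=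
  C.rank = k ∧ nonnegMinors C

/-- `C` represents a point of the totally positive Grassmannian `Gr_{>0}(k,n)`. -/
def GrPos {k n : ℕ} (C : Matrix (Fin k) (Fin n) ℝ) : Prop :=
  C.rank = k ∧ posMinors C

/-- `alt` negates every second column. -/
def altM {m n : ℕ} (A : Matrix (Fin m) (Fin n) ℝ) : Matrix (Fin m) (Fin n) ℝ :=
  Matrix.of fun i j => (-1 : ℝ) ^ (j : ℕ) * A i j

/-- `(2,0)`-nondegeneracy: consecutive columns are linearly independent. -/
def Nondeg20 (n : ℕ) (k : ℤ) {m : ℕ} (C : Matrix (Fin m) (Fin n) ℝ) : Prop :=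
  ∀ i : ℤ, LinearIndependent ℝ ![colExt (sgn k) C i, colExt (sgn k) C (i + 1)]

/-- `(0,2)`-nondegeneracy: `C_i ∈ span(C_{i+1}, …, C_{i+n-2})`. -/
def Nondeg02 (n : ℕ) (k : ℤ) {m : ℕ} (C : Matrix (Fin m) (Fin n) ℝ) : Prop :=
  ∀ i : ℤ, colExt (sgn k) C i ∈
    Submodule.span ℝ ((fun t : ℤ => colExt (sgn k) C t) '' Set.Icc (i + 1) (i + (n : ℤ) - 2))

/-- Connectedness of a matrix: no cyclic splitting of the columns into a direct sum. -/
def ConnMat (n : ℕ) (k : ℤ) {m : ℕ} (C : Matrix (Fin m) (Fin n) ℝ) : Prop :=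
  ¬ ∃ i j : ℤ, i < j ∧ j < i + (n : ℤ) ∧
    IsCompl (Submodule.span ℝ ((fun t : ℤ => colExt (sgn k) C t) '' Set.Icc i (j - 1)))
      (Submodule.span ℝ ((fun t : ℤ => colExt (sgn k) C t) '' Set.Icc j (i + (n : ℤ) - 1)))

/-- `C` represents a point of `Gr_{≥2}(k,n)`: totally nonnegative, connected,
and 2-nondegenerate. -/
def GrGe2 (n k : ℕ) (C : Matrix (Fin k) (Fin n) ℝ) : Prop :=
  GrNonneg C ∧ Nondeg20 n (k : ℤ) C ∧ Nondeg02 n (k : ℤ) C ∧ ConnMat n (k : ℤ) C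

/-- The orthogonal complement of a subspace of `ℝⁿ` with respect to the dot product. -/
noncomputable def perpSub {n : ℕ} (U : Submodule ℝ (Fin n → ℝ)) : Submodule ℝ (Fin n → ℝ) where
  carrier := {v | ∀ u ∈ U, dotProduct v u = 0}
  zero_mem' := fun u _ => zero_dotProduct u
  add_mem' := fun {a b} ha hb u hu => by
    rw [add_dotProduct, ha u hu, hb u hu, add_zero]
  smul_mem' := fun c v hv u hu => by
    rw [smul_dotProduct, hv u hu, smul_zero]

/-- The planar Mandelstam variables. -/
noncomputable def Mand {n : ℕ} (ε : ℝ) (lam lat : Matrix (Fin 2) (Fin n) ℝ) (i j : ℤ) : ℝ :=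
  ∑ p ∈ Finset.Ioc i j, ∑ q ∈ Finset.Ioc p j, brkt ε lam p q * brkt ε lat p q

/-- `Q` is the magic projector `Q_λ`: it is determined by its action on row vectors
(extended twisted-cyclically with sign `εx`, the brackets of `lam` using sign `εl`). -/
def IsQmat {n : ℕ} (εx εl : ℝ) (lam : Matrix (Fin 2) (Fin n) ℝ)
    (Q : Matrix (Fin n) (Fin n) ℝ) : Prop :=
  ∀ (x : Fin n → ℝ) (b : Fin n),
    Matrix.vecMul x Q b =
      (vecExt εx x (((b : ℕ) : ℤ) - 1) * brkt εl lam ((b : ℕ) : ℤ) (((b : ℕ) : ℤ) + 1)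
        + vecExt εx x ((b : ℕ) : ℤ) * brkt εl lam (((b : ℕ) : ℤ) + 1) (((b : ℕ) : ℤ) - 1)
        + vecExt εx x (((b : ℕ) : ℤ) + 1) * brkt εl lam (((b : ℕ) : ℤ) - 1) ((b : ℕ) : ℤ))
      / (brkt εl lam (((b : ℕ) : ℤ) - 1) ((b : ℕ) : ℤ) *
          brkt εl lam ((b : ℕ) : ℤ) (((b : ℕ) : ℤ) + 1))

/-- The coefficients `t^λ_i`. -/
noncomputable def tcoef {n : ℕ} (ε : ℝ) (lam : Matrix (Fin 2) (Fin n) ℝ) (j : ℤ) : ℝ :=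
  brkt ε lam (j + 1) (j - 1) / (brkt ε lam (j - 1) j * brkt ε lam j (j + 1))

/-- The involution `Θ` on `2 × n` matrices. -/
noncomputable def Theta {n : ℕ} (ε : ℝ) (lam : Matrix (Fin 2) (Fin n) ℝ) :
    Matrix (Fin 2) (Fin n) ℝ :=
  Matrix.of fun r j =>
    (-1 : ℝ) ^ (j : ℕ) * tcoef ε lam ((j : ℕ) : ℤ) * (if r = 0 then lam 0 j else -(lam 1 j))

/-- The Minkowski bilinear form on `ℝ^{2,2} ≅ ℂ²`. -/
noncomputable def minkDot (P Q : ℂ × ℂ) : ℝ :=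
  (P.1 * (starRingEnd ℂ) Q.1 - P.2 * (starRingEnd ℂ) Q.2).re

/-! Since `C` has rank `k`, its rows stay linearly independent over `ℂ`, so `a ↦ α(a)` is injective
with image the complex row span. On the other side, `yᵢ ỹᵢ = zᵢ ≠ 0` forces `yᵢ ≠ 0` and
`ỹᵢ = zᵢ / yᵢ`, so a pair `(y, ỹ)` is determined by `y = α(a)`. -/

open Function

theorem Matrix.linearIndependent_row_of_rank_eq_card {K m n : Type*} [Field K] [Fintype m]
    [Fintype n] {M : Matrix m n K} (hM : M.rank = Fintype.card m) : LinearIndependent K M.row := by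
  rw [linearIndependent_iff_card_eq_finrank_span, Set.finrank, ← M.rank_eq_finrank_span_row, hM]

theorem Matrix.vecMul_map_algebraMap_injective {K L m n : Type*} [Field K] [Field L]
    [Algebra K L] [Fintype m] [Fintype n] {M : Matrix m n K} (hM : M.rank = Fintype.card m) :
    Injective (M.map (algebraMap K L)).vecMul := by
  rw [Matrix.vecMul_injective_iff]
  exact linearIndependent_algebraMap_comp_iff.mpr (Matrix.linearIndependent_row_of_rank_eq_card hM)

theorem bijOn_prodMk_div_of_injective {V ι K : Type*} [Field K] {L : V → ι → K}
    (hL : Injective L) (P : (ι → K) → Prop) {z : ι → K} (hz : ∀ i, z i ≠ 0) :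
    Set.BijOn (fun a => (L a, fun i => z i / L a i))
      {a | (∀ i, L a i ≠ 0) ∧ P (fun i => z i / L a i)}
      {p | p.1 ∈ Set.range L ∧ P p.2 ∧ ∀ i, p.1 i * p.2 i = z i} := by
  refine ⟨fun a ⟨ha, hP⟩ => ⟨⟨a, rfl⟩, hP, fun i => mul_div_cancel₀ _ (ha i)⟩,
    fun a _ b _ hab => hL (congrArg Prod.fst hab), ?_⟩
  rintro ⟨_, w⟩ ⟨⟨a, rfl⟩, hP, hprod⟩
  have ha : ∀ i, L a i ≠ 0 := fun i => left_ne_zero_of_mul (hprod i ▸ hz i)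
  have hw : w = fun i => z i / L a i :=
    funext fun i => by rw [← hprod i, mul_div_cancel_left₀ _ (ha i)]
  subst hw
  exact ⟨a, ⟨ha, hP⟩, rfl⟩

/-- the critical points of the master function of the hyperplane
arrangement attached to `C` are in bijection with the pairs `(y, ỹ)` used to build
t-embeddings with prescribed boundary data `z`. -/
theorem stmt18 (n k : ℕ) (C : Matrix (Fin k) (Fin n) ℝ) (hC : C.rank = k)
    (z : Fin n → ℂ) (hz : ∀ i, z i ≠ 0) :
    Set.BijOn
      (fun a : Fin k → ℂ =>
        ((fun i => ∑ m, a m * (C m i : ℂ)),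
          (fun i => z i / ∑ m, a m * (C m i : ℂ))))
      {a : Fin k → ℂ | (∀ i, ∑ m, a m * (C m i : ℂ) ≠ 0) ∧
        ∀ m₀ : Fin k, ∑ i, (z i / ∑ m, a m * (C m i : ℂ)) * (C m₀ i : ℂ) = 0}
      {p : (Fin n → ℂ) × (Fin n → ℂ) |
        p.1 ∈ Submodule.span ℂ (Set.range fun m : Fin k => fun i => (C m i : ℂ)) ∧
        (∀ m₀ : Fin k, ∑ i, p.2 i * (C m₀ i : ℂ) = 0) ∧
        ∀ i, p.1 i * p.2 i = z i} := by
  set M : Matrix (Fin k) (Fin n) ℂ := C.map (algebraMap ℝ ℂ)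
  have hM : Injective M.vecMul :=
    Matrix.vecMul_map_algebraMap_injective (by rwa [Fintype.card_fin])
  have hspan : (Submodule.span ℂ (Set.range M.row) : Set (Fin n → ℂ)) = Set.range M.vecMul := by
    rw [← range_vecMulLinear]
    rfl
  have := bijOn_prodMk_div_of_injective hM (fun w => ∀ m₀, ∑ i, w i * (C m₀ i : ℂ) = 0) hz
  -- the statement's sets are these up to unfolding `vecMul` and `Matrix.map`
  rwa [← hspan] at this
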